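/- arXiv:2501.16232 — 9 statements merged into one kernel-verified Lean document; each statement's English description precedes it below -/
import Mathlib

section
/- Let a, b, c be real numbers with a ≤ b ≤ c and a + b + c = 0. Then a³ + b³ + c³ ≤ (1/√6)·(a² + b² + c²)^{3/2}. -/
/-!
If `a + b + c = 0` then `a³ + b³ + c³ = 3abc` and `ab + bc + ca = -s/2` with `s = a² + b² + c²`,
so the discriminant `((a - b)(b - c)(c - a))²` of the cubic with roots `a, b, c` equals
`(s³ - 54 (abc)²) / 2`. Its nonnegativity gives `6 (a³ + b³ + c³)² ≤ s³`; take square roots.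
-/

theorem add_pow_three_add_pow_three_of_add_eq_zero {R : Type*} [CommRing R] {a b c : R}
    (h : a + b + c = 0) : a ^ 3 + b ^ 3 + c ^ 3 = 3 * (a * b * c) := by
  rw [show c = -a - b by linear_combination h]; ring

theorem sq_sub_mul_sub_mul_sub_of_add_eq_zero {R : Type*} [CommRing R] {a b c : R}
    (h : a + b + c = 0) :
    2 * ((a - b) * (b - c) * (c - a)) ^ 2 = (a ^ 2 + b ^ 2 + c ^ 2) ^ 3 - 54 * (a * b * c) ^ 2 := by
  rw [show c = -a - b by linear_combination h]; ring

theorem six_mul_sq_add_pow_three_le {a b c : ℝ} (h : a + b + c = 0) :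
    6 * (a ^ 3 + b ^ 3 + c ^ 3) ^ 2 ≤ (a ^ 2 + b ^ 2 + c ^ 2) ^ 3 := by
  have hdisc := sq_sub_mul_sub_mul_sub_of_add_eq_zero h
  rw [add_pow_three_add_pow_three_of_add_eq_zero h]
  nlinarith [sq_nonneg ((a - b) * (b - c) * (c - a))]

theorem le_inv_sqrt_mul_rpow_three_halves {x s k : ℝ} (hs : 0 ≤ s) (hk : 0 < k)
    (h : k * x ^ 2 ≤ s ^ 3) : x ≤ 1 / √k * s ^ ((3 : ℝ) / 2) := by
  rw [Real.rpow_div_two_eq_sqrt _ hs, Real.rpow_ofNat, one_div_mul_eq_div,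
    le_div_iff₀ (Real.sqrt_pos.mpr hk)]
  refine (le_abs_self _).trans (abs_le_of_sq_le_sq ?_ (by positivity))
  rwa [mul_pow, Real.sq_sqrt hk.le, ← pow_mul, mul_comm 3, pow_mul, Real.sq_sqrt hs, mul_comm]

theorem cubic_trace_upper_bound_general (a b c : ℝ)
    (hsum : a + b + c = 0) :
    a ^ 3 + b ^ 3 + c ^ 3 ≤ (1 / Real.sqrt 6) * (a ^ 2 + b ^ 2 + c ^ 2) ^ ((3 : ℝ) / 2) :=
  le_inv_sqrt_mul_rpow_three_halves (by positivity) (by norm_num) (six_mul_sq_add_pow_three_le hsum)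

theorem cubic_trace_upper_bound (a b c : ℝ) (hab : a ≤ b) (hbc : b ≤ c)
    (hsum : a + b + c = 0) :
    a ^ 3 + b ^ 3 + c ^ 3 ≤ (1 / Real.sqrt 6) * (a ^ 2 + b ^ 2 + c ^ 2) ^ ((3 : ℝ) / 2) :=
  cubic_trace_upper_bound_general a b c hsum
end

section
/- Let a, b, c be real numbers with a ≤ b ≤ c and a + b + c = 0. Then a³ + b³ + c³ ≥ −(1/√6)·(a² + b² + c²)^{3/2}. -/
/-! For `a + b + c = 0` the power sums `s = a² + b² + c²` and `p = a³ + b³ + c³` determine the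
discriminant of the cubic with roots `a, b, c`, namely `(s³ - 6 p²) / 2`. Being a product of
squares of root differences it is nonnegative, so `p² ≤ s³ / 6`, i.e. `|p| ≤ s^{3/2} / √6`. -/

lemma sum_sq_pow_three_sub_six_mul_sum_cube_sq_of_add_add_eq_zero {a b c : ℝ}
    (hsum : a + b + c = 0) :
    (a ^ 2 + b ^ 2 + c ^ 2) ^ 3 - 6 * (a ^ 3 + b ^ 3 + c ^ 3) ^ 2
      = 2 * ((a - b) * (b - c) * (c - a)) ^ 2 := by
  obtain rfl : c = -(a + b) := by linarith
  ring

lemma sum_cube_sq_le_of_add_add_eq_zero {a b c : ℝ} (hsum : a + b + c = 0) :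
    (a ^ 3 + b ^ 3 + c ^ 3) ^ 2 ≤ (a ^ 2 + b ^ 2 + c ^ 2) ^ 3 / 6 := by
  have hdisc := sum_sq_pow_three_sub_six_mul_sum_cube_sq_of_add_add_eq_zero hsum
  have : 0 ≤ 2 * ((a - b) * (b - c) * (c - a)) ^ 2 := by positivity
  linarith

lemma Real.rpow_three_halves_sq {x : ℝ} (hx : 0 ≤ x) : (x ^ ((3 : ℝ) / 2)) ^ 2 = x ^ 3 := by
  rw [← Real.rpow_mul_natCast hx]
  norm_num

theorem cubic_trace_lower_bound_general (a b c : ℝ)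
    (hsum : a + b + c = 0) :
    a ^ 3 + b ^ 3 + c ^ 3 ≥ -(1 / Real.sqrt 6) * (a ^ 2 + b ^ 2 + c ^ 2) ^ ((3 : ℝ) / 2) := by
  have hs : 0 ≤ a ^ 2 + b ^ 2 + c ^ 2 := by positivity
  have hsq : (a ^ 3 + b ^ 3 + c ^ 3) ^ 2
      ≤ (1 / Real.sqrt 6 * (a ^ 2 + b ^ 2 + c ^ 2) ^ ((3 : ℝ) / 2)) ^ 2 := by
    rw [mul_pow, Real.rpow_three_halves_sq hs, div_pow, one_pow,
      Real.sq_sqrt (by norm_num), one_div_mul_eq_div]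
    exact sum_cube_sq_le_of_add_add_eq_zero hsum
  rw [neg_mul, ge_iff_le]
  exact (abs_le_of_sq_le_sq' hsq (by positivity)).1

theorem cubic_trace_lower_bound (a b c : ℝ) (hab : a ≤ b) (hbc : b ≤ c)
    (hsum : a + b + c = 0) :
    a ^ 3 + b ^ 3 + c ^ 3 ≥ -(1 / Real.sqrt 6) * (a ^ 2 + b ^ 2 + c ^ 2) ^ ((3 : ℝ) / 2) :=
  cubic_trace_lower_bound_general a b c hsum
end

section
/- Let a, b, c be real numbers with a ≤ b ≤ c and a + b + c = 0. Then a³ + b³ + c³ = (1/√6)·(a² + b² + c²)^{3/2} if and only if a = b = −c/2. -/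
/-!
Since `a + b + c = 0`, the power sum `a³ + b³ + c³` equals `3abc`, and the discriminant identity
`(a² + b² + c²)³ - 54 (abc)² = 2 ((a - b)(b - c)(c - a))²` shows both that the bound holds and that
equality forces two of `a, b, c` to coincide. Together with `abc ≥ 0`, the ordering `a ≤ b ≤ c`
leaves only `a = b = -c/2`.
-/

section CommRing

variable {R : Type*} [CommRing R] {a b c : R}

theorem cube_add_cube_add_cube_of_add_eq_zero (h : a + b + c = 0) :
    a ^ 3 + b ^ 3 + c ^ 3 = 3 * (a * b * c) := by
  obtain rfl : c = -(a + b) := by linear_combination h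
  ring

theorem sq_sum_pow_three_sub_of_add_eq_zero (h : a + b + c = 0) :
    (a ^ 2 + b ^ 2 + c ^ 2) ^ 3 - 54 * (a * b * c) ^ 2 = 2 * ((a - b) * (b - c) * (c - a)) ^ 2 := by
  obtain rfl : c = -(a + b) := by linear_combination h
  ring

end CommRing

theorem eq_one_div_sqrt_six_mul_rpow_three_halves_iff {x s : ℝ} (hs : 0 ≤ s) :
    x = 1 / √6 * s ^ ((3 : ℝ) / 2) ↔ 0 ≤ x ∧ 6 * x ^ 2 = s ^ 3 := by
  have hy : 0 ≤ 1 / √6 * s ^ ((3 : ℝ) / 2) := by positivity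
  have hy_sq : (1 / √6 * s ^ ((3 : ℝ) / 2)) ^ 2 = s ^ 3 / 6 := by
    rw [Real.rpow_div_two_eq_sqrt _ hs, show (3 : ℝ) = (3 : ℕ) by norm_num, Real.rpow_natCast,
      mul_pow, ← pow_mul, div_pow, Real.sq_sqrt (by norm_num), one_pow, mul_comm 3 2, pow_mul,
      Real.sq_sqrt hs]
    ring
  constructor
  · rintro rfl
    exact ⟨hy, by rw [hy_sq]; ring⟩
  · rintro ⟨hx, hx_sq⟩
    rw [← pow_left_inj₀ hx hy two_ne_zero, hy_sq]
    linear_combination hx_sq / 6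

theorem eq_and_eq_neg_div_two_iff_of_le_of_le {a b c : ℝ} (hab : a ≤ b) (hbc : b ≤ c)
    (hsum : a + b + c = 0) :
    (0 ≤ a * b * c ∧ (a - b) * (b - c) * (c - a) = 0) ↔ a = b ∧ b = -c / 2 := by
  have hc : 0 ≤ c := by linarith
  constructor
  · rintro ⟨habc, hzero⟩
    rcases mul_eq_zero.mp hzero with hzero | hca
    · rcases mul_eq_zero.mp hzero with hab' | hbc'
      · exact ⟨by linarith, by linarith⟩
      · -- `b = c` and `a = -2c`, so `abc = -2c³ ≥ 0` forces `c = 0`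
        obtain rfl : b = c := by linarith
        obtain rfl : a = -2 * b := by linarith
        have hb3 : b ^ 3 = 0 := le_antisymm (by linarith) (pow_nonneg hc 3)
        obtain rfl : b = 0 := pow_eq_zero_iff three_ne_zero |>.mp hb3
        norm_num
    · exact ⟨by linarith, by linarith⟩
  · rintro ⟨rfl, hb⟩
    obtain rfl : c = -2 * a := by linarith
    exact ⟨by nlinarith [mul_nonneg (sq_nonneg a) hc], by ring⟩

theorem cubic_trace_upper_equality (a b c : ℝ) (hab : a ≤ b) (hbc : b ≤ c)
    (hsum : a + b + c = 0) :
    a ^ 3 + b ^ 3 + c ^ 3 = (1 / Real.sqrt 6) * (a ^ 2 + b ^ 2 + c ^ 2) ^ ((3 : ℝ) / 2) ↔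
      a = b ∧ b = -c / 2 := by
  have hdisc := sq_sum_pow_three_sub_of_add_eq_zero hsum
  rw [cube_add_cube_add_cube_of_add_eq_zero hsum,
    eq_one_div_sqrt_six_mul_rpow_three_halves_iff (by positivity),
    ← eq_and_eq_neg_div_two_iff_of_le_of_le hab hbc hsum]
  refine and_congr (mul_nonneg_iff_of_pos_left three_pos) ⟨fun h => ?_, fun h => ?_⟩
  · exact pow_eq_zero_iff two_ne_zero |>.mp (by linear_combination -hdisc / 2 - h / 2)
  · rw [h] at hdisc
    linear_combination -hdisc
end

section
/- Let a, b, c be real numbers with a ≤ b ≤ c and a + b + c = 0. Then a³ + b³ + c³ = −(1/√6)·(a² + b² + c²)^{3/2} if and only if b = c = −a/2. -/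
/-!
With `a + b + c = 0`, `S = a² + b² + c²` and `T = a³ + b³ + c³`, the discriminant of the cubic
with roots `a, b, c` gives `S³ - 6 T² = 2 ((a - b)(b - c)(c - a))²`. The equality
`T = -S^{3/2}/√6` amounts to `T ≤ 0` and `6 T² = S³`, i.e. to `T ≤ 0` and two of `a, b, c`
coinciding. Under `a ≤ b ≤ c` the case `a = b` gives `c = -2a ≥ a` and `T = -6a³`, so `T ≤ 0`
only when `a = b = c = 0`.
-/

lemma eq_neg_one_div_sqrt_mul_sqrt_pow_three_iff {k x t : ℝ} (hk : 0 < k) (hx : 0 ≤ x) :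
    t = -(1 / Real.sqrt k) * Real.sqrt x ^ 3 ↔ t ≤ 0 ∧ k * t ^ 2 = x ^ 3 := by
  have hsk : 0 < Real.sqrt k := Real.sqrt_pos.mpr hk
  have hsq : (Real.sqrt x ^ 3) ^ 2 = x ^ 3 := by
    rw [← pow_mul, mul_comm, pow_mul, Real.sq_sqrt hx]
  have hkk : (-t * Real.sqrt k) ^ 2 = k * t ^ 2 := by
    rw [mul_pow, Real.sq_sqrt hk.le]
    ring
  rw [eq_comm, neg_mul, neg_eq_iff_eq_neg, one_div_mul_eq_div, div_eq_iff hsk.ne']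
  constructor
  · intro h
    have hneg : 0 ≤ -t * Real.sqrt k := h ▸ by positivity
    exact ⟨by nlinarith, by rw [← hkk, ← h, hsq]⟩
  · rintro ⟨ht, h⟩
    have hneg : 0 ≤ -t * Real.sqrt k := by nlinarith
    exact (pow_left_inj₀ (by positivity) hneg two_ne_zero).mp (by rw [hsq, hkk, h])

lemma sum_sq_pow_three_sub_six_mul_sum_cube_sq {a b c : ℝ} (h : a + b + c = 0) :
    (a ^ 2 + b ^ 2 + c ^ 2) ^ 3 - 6 * (a ^ 3 + b ^ 3 + c ^ 3) ^ 2
      = 2 * ((a - b) * (b - c) * (c - a)) ^ 2 := by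
  obtain rfl : c = -a - b := by linarith
  ring

lemma six_mul_sum_cube_sq_eq_sum_sq_pow_three_iff {a b c : ℝ} (h : a + b + c = 0) :
    6 * (a ^ 3 + b ^ 3 + c ^ 3) ^ 2 = (a ^ 2 + b ^ 2 + c ^ 2) ^ 3 ↔ a = b ∨ b = c ∨ c = a := by
  rw [eq_comm, ← sub_eq_zero, sum_sq_pow_three_sub_six_mul_sum_cube_sq h]
  simp [sub_eq_zero, or_assoc]

theorem cubic_trace_lower_equality (a b c : ℝ) (hab : a ≤ b) (hbc : b ≤ c)
    (hsum : a + b + c = 0) :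
    a ^ 3 + b ^ 3 + c ^ 3 = -(1 / Real.sqrt 6) * (a ^ 2 + b ^ 2 + c ^ 2) ^ ((3 : ℝ) / 2) ↔
      b = c ∧ c = -a / 2 := by
  have hS : 0 ≤ a ^ 2 + b ^ 2 + c ^ 2 := by positivity
  rw [Real.rpow_div_two_eq_sqrt _ hS, Real.rpow_ofNat,
    eq_neg_one_div_sqrt_mul_sqrt_pow_three_iff (by norm_num) hS,
    six_mul_sum_cube_sq_eq_sum_sq_pow_three_iff hsum]
  constructor
  · rintro ⟨hT, rfl | hbc' | rfl⟩
    · obtain rfl : c = -2 * a := by linarith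
      have ha : 0 ≤ a := (Odd.pow_nonneg_iff (n := 3) (by decide)).mp (by nlinarith)
      constructor <;> linarith
    · exact ⟨hbc', by linarith⟩
    · constructor <;> linarith
  · rintro ⟨rfl, hc⟩
    have ha : a ^ 3 ≤ 0 := Odd.pow_nonpos (by decide) (by linarith)
    refine ⟨?_, Or.inr (Or.inl rfl)⟩
    rw [hc]
    nlinarith
end

section
/- Let λ₁ ≤ λ₂ ≤ λ₃ ≤ λ₄ be real numbers with λ₁ + λ₂ + λ₃ + λ₄ = 0, λ₁·λ₂·λ₃·λ₄ = 0, not all λᵢ zero, and λ₁³ + λ₂³ + λ₃³ + λ₄³ = (1/√6)·(λ₁² + λ₂² + λ₃² + λ₄²)^{3/2}. Then there exists a real number λ > 0 such that λ₁ = λ₂ = −λ, λ₃ = 0 and λ₄ = 2λ. -/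
/-!
Since the λᵢ are ordered, sum to zero and are not all zero, the vanishing one is λ₂ or λ₃, and
the other three satisfy `6 (x³ + y³ + z³)² = (x² + y² + z²)³`. For `x + y + z = 0` this says
`54 (xyz)² = (x² + y² + z²)³`, and the difference of the two sides is twice the discriminant
`((x - y)(y - z)(z - x))²`, so two of the three coincide; the sign of `x³ + y³ + z³` then forces
the two smaller ones to be equal.
-/

section ThreeReals

variable {x y z : ℝ}

theorem cube_add_cube_add_cube_of_add_add_eq_zero (h : x + y + z = 0) :
    x ^ 3 + y ^ 3 + z ^ 3 = 3 * (x * y * z) := by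
  obtain rfl : z = -x - y := by linarith
  ring

theorem sq_add_sq_add_sq_pow_three_of_add_add_eq_zero (h : x + y + z = 0) :
    (x ^ 2 + y ^ 2 + z ^ 2) ^ 3 = 54 * (x * y * z) ^ 2 + 2 * ((x - y) * (y - z) * (z - x)) ^ 2 := by
  obtain rfl : z = -x - y := by linarith
  ring

theorem eq_and_eq_neg_two_mul_of_six_mul_sq_cube_sum_eq (hxy : x ≤ y) (hyz : y ≤ z)
    (hsum : x + y + z = 0) (hcube : 0 ≤ x ^ 3 + y ^ 3 + z ^ 3)
    (heq : 6 * (x ^ 3 + y ^ 3 + z ^ 3) ^ 2 = (x ^ 2 + y ^ 2 + z ^ 2) ^ 3) :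
    x = y ∧ z = -2 * x := by
  rw [cube_add_cube_add_cube_of_add_add_eq_zero hsum] at hcube heq
  rw [sq_add_sq_add_sq_pow_three_of_add_add_eq_zero hsum] at heq
  have hdiscr : (x - y) * (y - z) * (z - x) = 0 := by
    apply pow_eq_zero_iff two_ne_zero |>.mp
    linarith
  have hx_eq_y : x = y := by
    rcases mul_eq_zero.mp hdiscr with h | h
    · rcases mul_eq_zero.mp h with h | h
      · linarith
      · -- `y = z` gives `x = -2y` and `x³ + y³ + z³ = -6y³ ≥ 0`, so `0 ≤ x ≤ y ≤ 0`.
        have hz : z = y := by linarith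
        have hx : x = -2 * y := by linarith
        rw [hz, hx] at hcube
        have hy : y ≤ 0 := by
          by_contra! hy
          nlinarith [pow_pos hy 3]
        linarith
    · linarith
  exact ⟨hx_eq_y, by linarith⟩

end ThreeReals

theorem six_mul_sq_inv_sqrt_six_mul_rpow {s : ℝ} (hs : 0 ≤ s) :
    6 * (1 / √6 * s ^ ((3 : ℝ) / 2)) ^ 2 = s ^ 3 := by
  have hrpow : (s ^ ((3 : ℝ) / 2)) ^ 2 = s ^ 3 := by
    rw [← Real.rpow_natCast, ← Real.rpow_mul hs]
    norm_num
  rw [mul_pow, hrpow, div_pow, Real.sq_sqrt (by norm_num)]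
  ring

theorem f3_max_case (l1 l2 l3 l4 : ℝ)
    (h12 : l1 ≤ l2) (h23 : l2 ≤ l3) (h34 : l3 ≤ l4)
    (hsum : l1 + l2 + l3 + l4 = 0) (hprod : l1 * l2 * l3 * l4 = 0)
    (hne : ¬(l1 = 0 ∧ l2 = 0 ∧ l3 = 0 ∧ l4 = 0))
    (heq : l1 ^ 3 + l2 ^ 3 + l3 ^ 3 + l4 ^ 3 =
      (1 / Real.sqrt 6) * (l1 ^ 2 + l2 ^ 2 + l3 ^ 2 + l4 ^ 2) ^ ((3 : ℝ) / 2)) :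
    ∃ l : ℝ, 0 < l ∧ l1 = -l ∧ l2 = -l ∧ l3 = 0 ∧ l4 = 2 * l := by
  have hcube : 0 ≤ l1 ^ 3 + l2 ^ 3 + l3 ^ 3 + l4 ^ 3 := heq ▸ by positivity
  have h6 := heq ▸ six_mul_sq_inv_sqrt_six_mul_rpow
    (by positivity : 0 ≤ l1 ^ 2 + l2 ^ 2 + l3 ^ 2 + l4 ^ 2)
  rcases mul_eq_zero.mp hprod with h | rfl
  · rcases mul_eq_zero.mp h with h | rfl
    · rcases mul_eq_zero.mp h with rfl | rfl
      · exact absurd ⟨rfl, by linarith, by linarith, by linarith⟩ hne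
      · obtain ⟨rfl, -⟩ := eq_and_eq_neg_two_mul_of_six_mul_sq_cube_sum_eq (h12.trans h23) h34
          (by linarith) (by simpa using hcube) (by linear_combination h6)
        exact absurd ⟨by linarith, rfl, by linarith, by linarith⟩ hne
    · obtain ⟨rfl, rfl⟩ := eq_and_eq_neg_two_mul_of_six_mul_sq_cube_sum_eq h12 (h23.trans h34)
        (by linarith) (by simpa using hcube) (by linear_combination h6)
      have hl1 : l1 ≠ 0 := fun h => hne ⟨h, h, rfl, by rw [h]; ring⟩
      exact ⟨-l1, by linarith [lt_of_le_of_ne h23 hl1], by ring, by ring, rfl, by ring⟩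
  · exact absurd ⟨by linarith, by linarith, by linarith, rfl⟩ hne
end

section
/- Let λ₁ ≤ λ₂ ≤ λ₃ ≤ λ₄ be real numbers with λ₁ + λ₂ + λ₃ + λ₄ = 0, λ₁·λ₂·λ₃·λ₄ = 0, not all λᵢ zero, and λ₁³ + λ₂³ + λ₃³ + λ₄³ = −(1/√6)·(λ₁² + λ₂² + λ₃² + λ₄²)^{3/2}. Then there exists a real number λ > 0 such that λ₁ = −2λ, λ₂ = 0 and λ₃ = λ₄ = λ. -/
/-!
A zero principal curvature leaves three curvatures `x ≤ y ≤ z` with `x + y + z = 0`. For such a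
triple `x³ + y³ + z³ = 3xyz`, and the discriminant identity
`(x² + y² + z²)³ = 54 (xyz)² + 2 ((x - y)(y - z)(z - x))²` shows that `f₃² ≤ |A|⁶ / 6`, with
equality exactly when two of the three curvatures coincide. The sign of `f₃` then rules out
every configuration except `(-2λ, λ, λ)`, and ordering forces the zero curvature into the
second slot.
-/

lemma cube_add_cube_add_cube_of_add_eq_zero_s7 {x y z : ℝ} (h : x + y + z = 0) :
    x ^ 3 + y ^ 3 + z ^ 3 = 3 * (x * y * z) := by
  obtain rfl : z = -(x + y) := by linarith
  ring

lemma sq_add_sq_add_sq_pow_three_of_add_eq_zero {x y z : ℝ} (h : x + y + z = 0) :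
    (x ^ 2 + y ^ 2 + z ^ 2) ^ 3 = 54 * (x * y * z) ^ 2 + 2 * ((x - y) * (y - z) * (z - x)) ^ 2 := by
  obtain rfl : z = -(x + y) := by linarith
  ring

lemma nonpos_and_mul_sq_eq_of_eq_neg_inv_sqrt_mul_rpow {a c S : ℝ} (hc : 0 < c) (hS : 0 ≤ S)
    (h : a = -((1 / √c) * S ^ ((3 : ℝ) / 2))) : a ≤ 0 ∧ c * a ^ 2 = S ^ 3 := by
  refine ⟨h ▸ neg_nonpos.mpr (by positivity), ?_⟩
  have hpow : (S ^ ((3 : ℝ) / 2)) ^ 2 = S ^ 3 := by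
    rw [← Real.rpow_mul_natCast hS, ← Real.rpow_natCast]
    norm_num
  rw [h, neg_sq, mul_pow, hpow, div_pow, Real.sq_sqrt hc.le]
  field_simp

lemma eq_neg_two_mul_and_eq_of_six_mul_sq_eq {x y z : ℝ} (hxy : x ≤ y) (hyz : y ≤ z)
    (hsum : x + y + z = 0) (hneg : x ^ 3 + y ^ 3 + z ^ 3 ≤ 0)
    (h : 6 * (x ^ 3 + y ^ 3 + z ^ 3) ^ 2 = (x ^ 2 + y ^ 2 + z ^ 2) ^ 3) :
    x = -(2 * y) ∧ z = y := by
  rw [cube_add_cube_add_cube_of_add_eq_zero_s7 hsum] at hneg h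
  rw [sq_add_sq_add_sq_pow_three_of_add_eq_zero hsum] at h
  have hdisc : (x - y) * (y - z) * (z - x) = 0 := by nlinarith
  rcases mul_eq_zero.mp hdisc with hxyz | hzx
  · rcases mul_eq_zero.mp hxyz with hxy' | hyz'
    · -- `x = y < 0` would make `xyz = -2x³` positive
      obtain rfl : y = x := by linarith
      obtain rfl : z = -(2 * y) := by linarith
      have : 0 ≤ y := by
        by_contra! hy
        nlinarith [mul_pos_of_neg_of_neg hy hy]
      constructor <;> linarith
    · constructor <;> linarith
  · constructor <;> linarith

theorem f3_min_case (l1 l2 l3 l4 : ℝ)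
    (h12 : l1 ≤ l2) (h23 : l2 ≤ l3) (h34 : l3 ≤ l4)
    (hsum : l1 + l2 + l3 + l4 = 0) (hprod : l1 * l2 * l3 * l4 = 0)
    (hne : ¬(l1 = 0 ∧ l2 = 0 ∧ l3 = 0 ∧ l4 = 0))
    (heq : l1 ^ 3 + l2 ^ 3 + l3 ^ 3 + l4 ^ 3 =
      -((1 / Real.sqrt 6) * (l1 ^ 2 + l2 ^ 2 + l3 ^ 2 + l4 ^ 2) ^ ((3 : ℝ) / 2))) :
    ∃ l : ℝ, 0 < l ∧ l1 = -(2 * l) ∧ l2 = 0 ∧ l3 = l ∧ l4 = l := by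
  obtain ⟨hneg, hsq⟩ :=
    nonpos_and_mul_sq_eq_of_eq_neg_inv_sqrt_mul_rpow (by norm_num) (by positivity) heq
  have hl1 : l1 < 0 := by
    by_contra! h
    exact hne ⟨by linarith, by linarith, by linarith, by linarith⟩
  have hl4 : 0 < l4 := by
    by_contra! h
    exact hne ⟨by linarith, by linarith, by linarith, by linarith⟩
  simp only [mul_eq_zero, hl1.ne, hl4.ne', false_or, or_false] at hprod
  rcases hprod with rfl | rfl
  · obtain ⟨h1, h4⟩ := eq_neg_two_mul_and_eq_of_six_mul_sq_eq (h12.trans h23) h34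
      (by linarith) (by simpa using hneg) (by simpa using hsq)
    exact ⟨l3, h4 ▸ hl4, h1, rfl, rfl, h4⟩
  · obtain ⟨-, h4⟩ := eq_neg_two_mul_and_eq_of_six_mul_sq_eq h12 (h23.trans h34)
      (by linarith) (by simpa using hneg) (by simpa using hsq)
    linarith
end

section
/- Let λ₁, λ₂, λ₃, λ₄ be real numbers with λ₁ + λ₂ + λ₃ + λ₄ = 0, set S = λ₁² + λ₂² + λ₃² + λ₄², and let t₁₂₃, t₁₂₄, t₁₃₄, t₂₃₄ be real numbers. Define 𝒜 = 2·∑_{1≤i<j<k≤4} (λᵢ² + λⱼ² + λ_k²)·t_{ijk}² and ℬ = 2·∑_{1≤i<j<k≤4} (λᵢλⱼ + λᵢλ_k + λⱼλ_k)·t_{ijk}². If 6·(t₁₂₃² + t₁₂₄² + t₁₃₄² + t₂₃₄²) = S·(S + 4) and 2𝒜 + ℬ = (1/2)·(4 + S)·S², then λ₄t₁₂₃ = 0, λ₃t₁₂₄ = 0, λ₂t₁₃₄ = 0 and λ₁t₂₃₄ = 0. -/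
/-! When `λ₁ + λ₂ + λ₃ + λ₄ = 0` and `m` is the index missing from the triple `ijk`, the weight
of `t_{ijk}²` in `2𝒜 + ℬ` is `4(S - λ_m²) + 2(λ_m² - S/2) = 3S - 2λ_m²`. Hence
`2𝒜 + ℬ = 3S · ∑ t² - 2 ∑ (λ_m t_{ijk})²`, and Simons' identity turns the first term into
`S²(S + 4)/2`. The second hypothesis then says that the sum of the squares `(λ_m t_{ijk})²`
vanishes. -/

theorem four_mul_sum_sq_add_two_mul_sum_mul_eq {R : Type*} [CommRing R] {a b c d : R}
    (h : a + b + c + d = 0) :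
    4 * (a ^ 2 + b ^ 2 + c ^ 2) + 2 * (a * b + a * c + b * c) =
      3 * (a ^ 2 + b ^ 2 + c ^ 2 + d ^ 2) - 2 * d ^ 2 := by
  obtain rfl : d = -(a + b + c) := by linear_combination h
  ring

theorem sq_add_sq_add_sq_add_sq_eq_zero {R : Type*} [CommRing R] [LinearOrder R]
    [IsStrictOrderedRing R] {a b c d : R} (h : a ^ 2 + b ^ 2 + c ^ 2 + d ^ 2 = 0) :
    a = 0 ∧ b = 0 ∧ c = 0 ∧ d = 0 := by
  have ha := sq_nonneg a
  have hb := sq_nonneg b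
  have hc := sq_nonneg c
  have hd := sq_nonneg d
  refine ⟨?_, ?_, ?_, ?_⟩ <;> rw [← sq_nonpos_iff] <;> linarith

theorem vanishing_products (l1 l2 l3 l4 : ℝ)
    (hsum : l1 + l2 + l3 + l4 = 0)
    (S : ℝ) (hS : S = l1 ^ 2 + l2 ^ 2 + l3 ^ 2 + l4 ^ 2)
    (t123 t124 t134 t234 : ℝ)
    (hSimons : 6 * (t123 ^ 2 + t124 ^ 2 + t134 ^ 2 + t234 ^ 2) = S * (S + 4))
    (hAB : 2 * (2 * ((l1 ^ 2 + l2 ^ 2 + l3 ^ 2) * t123 ^ 2 + (l1 ^ 2 + l2 ^ 2 + l4 ^ 2) * t124 ^ 2 +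
        (l1 ^ 2 + l3 ^ 2 + l4 ^ 2) * t134 ^ 2 + (l2 ^ 2 + l3 ^ 2 + l4 ^ 2) * t234 ^ 2)) +
      2 * ((l1 * l2 + l1 * l3 + l2 * l3) * t123 ^ 2 + (l1 * l2 + l1 * l4 + l2 * l4) * t124 ^ 2 +
        (l1 * l3 + l1 * l4 + l3 * l4) * t134 ^ 2 + (l2 * l3 + l2 * l4 + l3 * l4) * t234 ^ 2) =
      (1 / 2) * (4 + S) * S ^ 2) :
    l4 * t123 = 0 ∧ l3 * t124 = 0 ∧ l2 * t134 = 0 ∧ l1 * t234 = 0 := by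
  have w123 := four_mul_sum_sq_add_two_mul_sum_mul_eq hsum
  have w124 := four_mul_sum_sq_add_two_mul_sum_mul_eq (a := l1) (b := l2) (c := l4) (d := l3)
    (by linear_combination hsum)
  have w134 := four_mul_sum_sq_add_two_mul_sum_mul_eq (a := l1) (b := l3) (c := l4) (d := l2)
    (by linear_combination hsum)
  have w234 := four_mul_sum_sq_add_two_mul_sum_mul_eq (a := l2) (b := l3) (c := l4) (d := l1)
    (by linear_combination hsum)
  subst hS
  apply sq_add_sq_add_sq_add_sq_eq_zero
  linear_combination (l1 ^ 2 + l2 ^ 2 + l3 ^ 2 + l4 ^ 2) / 4 * hSimons - 1 / 2 * hAB +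
    1 / 2 * (t123 ^ 2 * w123 + t124 ^ 2 * w124 + t134 ^ 2 * w134 + t234 ^ 2 * w234)
end

section
/- Let λ > μ > 0 be real numbers, let D be a real number, and set S = 2(λ² + λμ + μ²). If real numbers x₁, x₂, x₃, x₄ satisfy x₁ + x₂ + x₃ + x₄ = 0, −λx₁ − μx₂ + (λ + μ)x₄ = −D/3, and −λ³x₁ − μ³x₂ + (λ + μ)³x₄ = −(S/6)·D, then x₃ = 0. -/
/-!
The weights `-λ, -μ, λ + μ` sum to zero, so they are the roots of
`t³ - (S/2) t - λμ(λ + μ)`. Hence subtracting `S/2` times the first-moment equation from the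
third-moment one leaves `λμ(λ + μ)(x₁ + x₂ + x₄) = 0`; as `λμ(λ + μ) ≠ 0`, the trace
condition `x₁ + x₂ + x₃ + x₄ = 0` gives `x₃ = 0`.
-/

theorem h33kk_vanishes (l m : ℝ) (hlm : m < l) (hm : 0 < m) (D : ℝ)
    (S : ℝ) (hS : S = 2 * (l ^ 2 + l * m + m ^ 2))
    (x1 x2 x3 x4 : ℝ)
    (h0 : x1 + x2 + x3 + x4 = 0)
    (h1 : -l * x1 - m * x2 + (l + m) * x4 = -D / 3)
    (h3 : -l ^ 3 * x1 - m ^ 3 * x2 + (l + m) ^ 3 * x4 = -(S / 6) * D) :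
    x3 = 0 := by
  have hl : 0 < l := hm.trans hlm
  have hq : l * m * (l + m) ≠ 0 := by positivity
  have hsum : l * m * (l + m) * (x1 + x2 + x4) = 0 := by
    subst hS
    linear_combination h3 - (l ^ 2 + l * m + m ^ 2) * h1
  have hrest : x1 + x2 + x4 = 0 := (mul_eq_zero.mp hsum).resolve_left hq
  linarith
end

section
/- There do not exist real numbers λ > μ > 0 and real numbers x₂, x₃ such that, setting x₁ = λ and x₄ = −(λ + μ), the equations x₁ + x₂ + x₃ + x₄ = 0, −λx₁ − μx₂ + (λ + μ)x₄ = 0, and −λ³x₁ − μ³x₂ + (λ + μ)³x₄ = 0 all hold. -/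
/-!
Eliminating `x₂` between the last two equations gives `μ² (λ² + (λ + μ)²) = λ⁴ + (λ + μ)⁴`,
which is impossible because `μ` is smaller than both `λ` and `λ + μ`.
-/

lemma sq_mul_sq_lt_pow_four {m a : ℝ} (h : |m| < |a|) : m ^ 2 * a ^ 2 < a ^ 4 := by
  have ha : 0 < a ^ 2 := by
    rw [← sq_abs]
    exact pow_pos ((abs_nonneg m).trans_lt h) 2
  calc m ^ 2 * a ^ 2 < a ^ 2 * a ^ 2 := mul_lt_mul_of_pos_right (sq_lt_sq.mpr h) ha
    _ = a ^ 4 := by ring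

theorem final_contradiction_case3ii :
    ¬ ∃ (l m x2 x3 : ℝ), m < l ∧ 0 < m ∧
      (l + x2 + x3 + -(l + m) = 0) ∧
      (-l * l - m * x2 + (l + m) * (-(l + m)) = 0) ∧
      (-l ^ 3 * l - m ^ 3 * x2 + (l + m) ^ 3 * (-(l + m)) = 0) := by
  rintro ⟨l, m, x2, _, hml, hm, _, h2, h3⟩
  have elim_x2 : m ^ 2 * (l ^ 2 + (l + m) ^ 2) = l ^ 4 + (l + m) ^ 4 := by
    linear_combination (-m ^ 2) * h2 + h3
  have hl : m ^ 2 * l ^ 2 < l ^ 4 :=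
    sq_mul_sq_lt_pow_four (by rw [abs_of_pos hm, abs_of_pos (hm.trans hml)]; exact hml)
  have hlm : m ^ 2 * (l + m) ^ 2 < (l + m) ^ 4 :=
    sq_mul_sq_lt_pow_four (by rw [abs_of_pos hm, abs_of_pos (by linarith)]; linarith)
  linarith
end
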